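/- arXiv:1811.11395 — 2 statements merged into one kernel-verified Lean document; each statement's English description precedes it below -/
import Mathlib

section
/- Let k be a field and let ι_i : k → K_i (1 ≤ i ≤ n) be field embeddings. Let k_i denote the algebraic closure of k inside K_i, with induced embeddings ι'_i : k → k_i. Then the family {ι_i} satisfies property (F) if and only if the family {ι'_i} satisfies property (F). -/
/-- `x : E` is separable and algebraic over `k` (relative to the embedding `f : k →+* E`):
it is a root of a nonzero separable polynomial with coefficients in `k`. -/
def IsSepElem {k E : Type} [Field k] [Field E] (f : k →+* E) (x : E) : Prop :=
  ∃ p : Polynomial k, p ≠ 0 ∧ p.Separable ∧ Polynomial.eval₂ f x p = 0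

/-- `x : E` is algebraic over `k` relative to the ring homomorphism `f : k →+* E`. -/
def IsAlgElem {k E : Type} [Field k] [CommRing E] (f : k →+* E) (x : E) : Prop :=
  ∃ p : Polynomial k, p ≠ 0 ∧ Polynomial.eval₂ f x p = 0

/-- Property (F) for a family of field embeddings `f i : k →+* K i`:
for any algebraic separable field extensions `g i : K i →+* L i` and any subring `l` of the
product ring `∀ i, L i` which is a field, contains the diagonal copy of `k`, and is algebraic
over `k`, the extension `k ⊆ l` is separable. -/
def PropertyF {ι : Type} (k : Type) [Field k] (K : ι → Type) [∀ i, Field (K i)]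
    (f : ∀ i, k →+* K i) : Prop :=
  ∀ (L : ι → Type) (_ : ∀ i, Field (L i)) (g : ∀ i, K i →+* L i),
    (∀ i, ∀ x : L i, IsSepElem (g i) x) →
    ∀ l : Subring (∀ i, L i), IsField l →
      (∀ c : k, (fun i => g i (f i c)) ∈ l) →
      (∀ x ∈ l, IsAlgElem (Pi.ringHom fun i => (g i).comp (f i)) x) →
      ∀ x ∈ l, ∃ p : Polynomial k, p ≠ 0 ∧ p.Separable ∧
        Polynomial.eval₂ (Pi.ringHom fun i => (g i).comp (f i)) x p = 0

/-!
Property (F) for a subfield `l` of a product ring transfers along injective maps of product rings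
that commute with the diagonal embeddings of `k`. A separable algebraic extension of `A i` embeds
over `A i` into the separable closure of `K i`, which gives (F) for `A` from (F) for `K`.
Conversely, let `L i` be separable algebraic over `K i`. A coordinate `y` of an element of `l` is
algebraic over `k` and separable over `K i`; since `minpoly (K i) y` divides `minpoly k y`, its
coefficients are integral over `k`, hence lie in `A i`, so `y` is separable over `A i`. Thus `l`
lies in the product of the separable closures of the `A i` in the `L i`.
-/

open Polynomial Function

section Transfer

variable {k R S : Type} [Field k] [CommRing R] [CommRing S]

/-- The condition that property (F) imposes on one subring `l` of a product, with `φ` the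
diagonal embedding of `k`. -/
def AlgSubfieldSeparable (φ : k →+* R) (l : Subring R) : Prop :=
  IsField l → (∀ c, φ c ∈ l) → (∀ x ∈ l, IsAlgElem φ x) →
    ∀ x ∈ l, ∃ p : k[X], p ≠ 0 ∧ p.Separable ∧ eval₂ φ x p = 0

theorem IsAlgElem.map {φ : k →+* R} {x : R} (hx : IsAlgElem φ x) (J : R →+* S) :
    IsAlgElem (J.comp φ) (J x) :=
  let ⟨p, hp, hpx⟩ := hx
  ⟨p, hp, by rw [← hom_eval₂, hpx, map_zero]⟩

theorem eval₂_comp_apply_eq_zero_iff {φ : k →+* R} {J : R →+* S} (hJ : Injective J) (x : R)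
    (p : k[X]) : eval₂ (J.comp φ) (J x) p = 0 ↔ eval₂ φ x p = 0 := by
  rw [← hom_eval₂, map_eq_zero_iff J hJ]

theorem algSubfieldSeparable_map_iff {φ : k →+* R} {J : R →+* S} (hJ : Injective J)
    (l : Subring R) : AlgSubfieldSeparable (J.comp φ) (l.map J) ↔ AlgSubfieldSeparable φ l := by
  have hfield : IsField (l.map J) ↔ IsField l :=
    (l.equivMapOfInjective J hJ).toMulEquiv.isField_congr.symm
  have hdiag : ∀ c, J.comp φ c ∈ l.map J ↔ φ c ∈ l := fun c =>
    ⟨fun ⟨_, hy, hyc⟩ => hJ hyc ▸ hy, fun hc => ⟨_, hc, rfl⟩⟩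
  simp only [AlgSubfieldSeparable, IsAlgElem, Subring.mem_map, forall_exists_index, and_imp,
    forall_apply_eq_imp_iff₂, eval₂_comp_apply_eq_zero_iff hJ, hfield, hdiag]

end Transfer

theorem algSubfieldSeparable_map_pi_iff {ι k : Type} [Field k] {M L : ι → Type}
    [∀ i, Field (M i)] [∀ i, Field (L i)] {φ : ∀ i, k →+* M i} {ψ : ∀ i, k →+* L i}
    (e : ∀ i, M i →+* L i) (he : ∀ i, (e i).comp (φ i) = ψ i) (l : Subring (∀ i, M i)) :
    AlgSubfieldSeparable (RingHom.pi ψ)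
        (l.map (RingHom.pi fun i => (e i).comp (Pi.evalRingHom M i))) ↔
      AlgSubfieldSeparable (RingHom.pi φ) l := by
  have hψ : RingHom.pi ψ = (RingHom.pi fun i => (e i).comp (Pi.evalRingHom M i)).comp
      (RingHom.pi φ) := by
    ext c i
    simp [← he]
  rw [hψ]
  exact algSubfieldSeparable_map_iff
    (fun u v huv => funext fun i => (e i).injective (congrFun huv i)) l

theorem propertyF_iff_forall_algSubfieldSeparable {ι k : Type} [Field k] (K : ι → Type)
    [∀ i, Field (K i)] (f : ∀ i, k →+* K i) :
    PropertyF k K f ↔ ∀ (L : ι → Type) (_ : ∀ i, Field (L i)) (g : ∀ i, K i →+* L i),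
      (∀ i x, IsSepElem (g i) x) →
        ∀ l, AlgSubfieldSeparable (RingHom.pi fun i => (g i).comp (f i)) l :=
  Iff.rfl

theorem isSepElem_algebraMap_iff {k E : Type} [Field k] [Field E] [Algebra k E] (x : E) :
    IsSepElem (algebraMap k E) x ↔ IsSeparable k x :=
  ⟨fun ⟨_, _, hp, hpx⟩ => hp.of_dvd (minpoly.dvd k x hpx),
    fun hx => ⟨minpoly k x, minpoly.ne_zero hx.isIntegral, hx, minpoly.aeval k x⟩⟩

theorem exists_separable_subextension {A L : Type} [Field A] [Field L] (j : A →+* L) :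
    ∃ (M : Type) (_ : Field M) (h : A →+* M) (e : M →+* L),
      (∀ x, IsSepElem h x) ∧ (∀ c, e (h c) = j c) ∧
        ∀ y, IsSepElem j y → y ∈ e.range := by
  let := j.toAlgebra
  exact ⟨separableClosure A L, inferInstance, algebraMap _ _, (separableClosure A L).val,
    fun x => (isSepElem_algebraMap_iff x).2 (Algebra.IsSeparable.isSeparable A x), fun _ => rfl,
    fun y hy => ⟨⟨y, (isSepElem_algebraMap_iff y).1 hy⟩, rfl⟩⟩

theorem exists_separable_extension {A K M : Type} [Field A] [Field K] [Field M] (j : A →+* K)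
    (h : A →+* M) (hM : ∀ x, IsSepElem h x) :
    ∃ (L : Type) (_ : Field L) (g : K →+* L) (e : M →+* L),
      (∀ z, IsSepElem g z) ∧ ∀ c, e (h c) = g (j c) := by
  let := j.toAlgebra
  let := h.toAlgebra
  have : Algebra.IsSeparable A M := ⟨fun x => (isSepElem_algebraMap_iff x).1 (hM x)⟩
  let e : M →ₐ[A] SeparableClosure K := IsSepClosed.lift
  exact ⟨SeparableClosure K, inferInstance, algebraMap K _, e,
    fun z => (isSepElem_algebraMap_iff z).2 (Algebra.IsSeparable.isSeparable K z),
    fun c => (e.commutes c).trans (IsScalarTower.algebraMap_apply A K _ c)⟩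

theorem IsSepElem.comp_subtype {k K L : Type} [Field k] [Field K] [Field L] (f : k →+* K)
    (g : K →+* L) (A : Subfield K) (hA : ∀ z, IsAlgElem f z → z ∈ A) {y : L}
    (hy : IsAlgElem (g.comp f) y) (hs : IsSepElem g y) : IsSepElem (g.comp A.subtype) y := by
  let := f.toAlgebra
  let := g.toAlgebra
  let := (g.comp f).toAlgebra
  have : IsScalarTower k K L := .of_algebraMap_eq fun _ => rfl
  have hyk : IsIntegral k y := IsAlgebraic.isIntegral hy
  have hyK : IsSeparable K y := (isSepElem_algebraMap_iff y).1 hs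
  have hlift := integralClosure.mem_lifts_of_monic_of_dvd_map K (minpoly.monic hyk)
    (minpoly.monic hyK.isIntegral) (minpoly.dvd_map_of_isScalarTower k K y)
  obtain ⟨p, hp⟩ : minpoly K y ∈ lifts A.subtype := by
    refine (lifts_iff_coeff_lifts _).2 fun n => ?_
    obtain ⟨c, hc⟩ := (lifts_iff_coeff_lifts _).1 hlift n
    obtain ⟨q, hq, hqc⟩ := c.2.isAlgebraic
    exact ⟨⟨c, hA c ⟨q, hq, hqc⟩⟩, hc⟩
  rw [coe_mapRingHom] at hp
  refine ⟨p, ?_, (separable_map A.subtype).1 (by rw [hp]; exact hyK), ?_⟩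
  · rintro rfl
    exact minpoly.ne_zero hyK.isIntegral (by rw [← hp, Polynomial.map_zero])
  · rw [← eval₂_map, hp]
    exact minpoly.aeval K y

theorem stmt_5_general {ι : Type} (k : Type) [Field k] (K : ι → Type) [∀ i, Field (K i)]
    (f : ∀ i, k →+* K i)
    (A : ∀ i, Subfield (K i))
    (hA : ∀ i (x : K i), x ∈ A i ↔ IsAlgElem (f i) x)
    (hmem : ∀ i (c : k), f i c ∈ A i) :
    PropertyF k K f ↔
      PropertyF k (fun i => (A i : Type)) (fun i => (f i).codRestrict (A i).toSubring (hmem i)) := by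
  rw [propertyF_iff_forall_algSubfieldSeparable, propertyF_iff_forall_algSubfieldSeparable]
  constructor
  · intro H M _ h hM l
    choose L _ g e hL he using fun i => exists_separable_extension (A i).subtype (h i) (hM i)
    exact (algSubfieldSeparable_map_pi_iff e (fun i => RingHom.ext fun c => he i _) l).1
      (H L _ g hL _)
  · intro H L _ g hL l hl hdiag halg
    choose M _ h e hM he hrange using
      fun i => exists_separable_subextension ((g i).comp (A i).subtype)
    let J := RingHom.pi fun i => (e i).comp (Pi.evalRingHom M i)
    have hlJ : l ≤ J.range := fun x hx => by
      choose y hy using fun i => hrange i (x i) <| IsSepElem.comp_subtype (f i) (g i) (A i)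
        (fun z => (hA i z).2) ((halg x hx).map (Pi.evalRingHom L i)) (hL i (x i))
      exact ⟨y, funext hy⟩
    have key := (algSubfieldSeparable_map_pi_iff (ψ := fun i => (g i).comp (f i)) e
      (fun i => RingHom.ext fun c => he i _) _).2 (H M _ h hM (l.comap J))
    rw [Subring.map_comap_eq_self hlJ] at key
    exact key hl hdiag halg

/-- Let `A i` be the algebraic closure of `k` inside `K i` (as a subfield), with the induced
embeddings `k →+* A i`. Then the family `{f i}` satisfies property (F) if and only if the
family of induced embeddings does. -/
theorem stmt_5 {ι : Type} [Finite ι] (k : Type) [Field k] (K : ι → Type) [∀ i, Field (K i)]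
    (f : ∀ i, k →+* K i)
    (A : ∀ i, Subfield (K i))
    (hA : ∀ i (x : K i), x ∈ A i ↔ IsAlgElem (f i) x)
    (hmem : ∀ i (c : k), f i c ∈ A i) :
    PropertyF k K f ↔
      PropertyF k (fun i => (A i : Type)) (fun i => (f i).codRestrict (A i).toSubring (hmem i)) :=
  stmt_5_general k K f A hA hmem
end

section
/- Let k₀ be a perfect field of characteristic p > 0 and let k be an extension field of k₀ of transcendence degree at most 1 over k₀. Then [k : k^p] ≤ p. -/
/-! An element `a ∈ k` that is not a `p`-th power is transcendental over `k₀`, since an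
algebraic extension of the perfect field `k₀` is perfect; as the transcendence degree is at most
one, `{a}` is a transcendence basis of `k / k₀`. Given another `b ∉ kᵖ`, the theorem on
separating transcendence bases over perfect fields makes one of `a, b` separable over `k₀`
adjoined the other, and a separable element `x` over a field `K` lies in `K(xᵖ)`; so one of
`a, b` lies in `kᵖ` adjoined the other. Both generate extensions of `kᵖ` of degree `p`, so
`kᵖ(a) = kᵖ(b)`. Hence `k = kᵖ(a)`, of degree `p` over `kᵖ`. -/

open IntermediateField Module Polynomial

section PowMem

theorem isIntegral_of_pow_mem {K : Type*} [Field K] {n : ℕ} (hn : 0 < n) {F : Subfield K} {a : K}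
    (hpow : a ^ n ∈ F) : IsIntegral F a :=
  IsIntegral.of_pow hn (isIntegral_algebraMap (x := (⟨a ^ n, hpow⟩ : F)))

variable {K : Type*} [Field K] {p : ℕ} [ExpChar K p]

theorem minpoly_eq_X_pow_sub_C_of_pow_mem (hp : p.Prime) {F : Subfield K} {a : K}
    (hpow : a ^ p ∈ F) (ha : a ∉ F) : minpoly F a = X ^ p - C ⟨a ^ p, hpow⟩ := by
  refine (minpoly.eq_of_irreducible_of_monic ?_ ?_ (monic_X_pow_sub_C _ hp.ne_zero)).symm
  · refine X_pow_sub_C_irreducible_of_prime hp fun b hb => ha ?_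
    have : (b : K) ^ p = a ^ p := congrArg Subtype.val hb
    exact frobenius_inj K p this ▸ b.2
  · simp only [map_sub, map_pow, aeval_X, aeval_C]
    exact sub_self _

theorem finrank_adjoin_simple_of_pow_mem (hp : p.Prime) {F : Subfield K} {a : K}
    (hpow : a ^ p ∈ F) (ha : a ∉ F) : finrank F F⟮a⟯ = p := by
  rw [adjoin.finrank (isIntegral_of_pow_mem hp.pos hpow),
    minpoly_eq_X_pow_sub_C_of_pow_mem hp hpow ha, natDegree_X_pow_sub_C]

theorem adjoin_simple_eq_of_mem_adjoin_simple (hp : p.Prime) {F : Subfield K} {a b : K}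
    (hapow : a ^ p ∈ F) (hbpow : b ^ p ∈ F) (ha : a ∉ F) (hb : b ∉ F) (hab : a ∈ F⟮b⟯) :
    F⟮a⟯ = F⟮b⟯ := by
  have : FiniteDimensional F F⟮b⟯ :=
    adjoin.finiteDimensional (isIntegral_of_pow_mem hp.pos hbpow)
  refine eq_of_le_of_finrank_eq (adjoin_simple_le_iff.2 hab) ?_
  rw [finrank_adjoin_simple_of_pow_mem hp hapow ha, finrank_adjoin_simple_of_pow_mem hp hbpow hb]

end PowMem

theorem trdeg_le_one_of_isAlgebraic_adjoin_simple {K L : Type*} [Field K] [Field L] [Algebra K L]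
    {x : L} (hx : Algebra.IsAlgebraic K⟮x⟯ L) : Algebra.trdeg K L ≤ 1 := by
  have := isAlgebraic_adjoin_iff_top.1 hx
  simpa using Algebra.IsAlgebraic.trdeg_le_cardinalMk K ({x} : Set L)

section Frobenius

variable (p : ℕ) {k₀ k : Type*} [Field k₀] [ExpChar k₀ p] [PerfectRing k₀ p] [Field k]
  [Algebra k₀ k] [ExpChar k p]

theorem pow_mem_frobenius_fieldRange (z : k) : z ^ p ∈ (frobenius k p).fieldRange :=
  ⟨z, rfl⟩

theorem algebraMap_mem_frobenius_fieldRange (c : k₀) :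
    algebraMap k₀ k c ∈ (frobenius k p).fieldRange :=
  ⟨algebraMap k₀ k ((frobeniusEquiv k₀ p).symm c), by
    rw [frobenius_def, ← map_pow, frobeniusEquiv_symm_pow_p]⟩

theorem mem_frobenius_fieldRange_of_isAlgebraic {a : k} (ha : IsAlgebraic k₀ a) :
    a ∈ (frobenius k p).fieldRange := by
  have : PerfectField k₀ := PerfectRing.toPerfectField k₀ p
  have : Algebra.IsAlgebraic k₀ k₀⟮a⟯ := isAlgebraic_adjoin_simple ha.isIntegral
  have : PerfectField k₀⟮a⟯ := Algebra.IsAlgebraic.perfectField k₀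
  obtain ⟨c, hc⟩ := surjective_frobenius k₀⟮a⟯ p ⟨a, mem_adjoin_simple_self k₀ a⟩
  exact ⟨c, congrArg Subtype.val hc⟩

theorem LinearIndepOn.pow_expChar {s : Set k} (hs : LinearIndepOn k₀ id s) :
    LinearIndepOn k₀ (· ^ p) s := by
  apply hs.map_of_injective_injective (frobeniusEquiv k₀ p).symm (frobenius k p).toAddMonoidHom
  · simp
  · simp
  · intro r m
    simp only [Algebra.smul_def]
    show ((algebraMap k₀ k) ((frobeniusEquiv k₀ p).symm r) * m) ^ p = _
    rw [mul_pow, ← map_pow, frobeniusEquiv_symm_pow_p]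
    rfl

theorem mem_adjoin_frobenius_fieldRange_of_isSeparable {x y : k} (h : IsSeparable k₀⟮y⟯ x) :
    x ∈ adjoin (frobenius k p).fieldRange {y} := by
  have hx : x ∈ k₀⟮y⟯⟮x ^ p⟯ := adjoin_simple_eq_adjoin_pow_expChar_of_isSeparable _ _ h p ▸
    mem_adjoin_simple_self _ x
  have hF : ((frobenius k p).fieldRange : Set k) ⊆ adjoin (frobenius k p).fieldRange {y} :=
    fun z hz => IntermediateField.algebraMap_mem _ (⟨z, hz⟩ : (frobenius k p).fieldRange)
  have hy : (k₀⟮y⟯ : Set k) ⊆ adjoin (frobenius k p).fieldRange {y} := by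
    refine (adjoin_subset_adjoin_iff _).2
      ⟨?_, Set.singleton_subset_iff.2 (mem_adjoin_simple_self _ y)⟩
    rintro _ ⟨c, rfl⟩
    exact hF (algebraMap_mem_frobenius_fieldRange p c)
  have hxp : (k₀⟮y⟯⟮x ^ p⟯ : Set k) ⊆ adjoin (frobenius k p).fieldRange {y} := by
    refine (adjoin_subset_adjoin_iff _).2 ⟨?_, Set.singleton_subset_iff.2 (hF ⟨x, rfl⟩)⟩
    rintro _ ⟨c, rfl⟩
    exact hy c.2
  exact hxp hx

theorem adjoin_frobenius_fieldRange_eq_top (hp : p.Prime) (htrdeg : Algebra.trdeg k₀ k ≤ 1)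
    {a : k} (ha : a ∉ (frobenius k p).fieldRange) :
    adjoin (frobenius k p).fieldRange {a} = ⊤ := by
  refine eq_top_iff.2 fun b _ => ?_
  by_cases hb : b ∈ (frobenius k p).fieldRange
  · exact IntermediateField.algebraMap_mem _ (⟨b, hb⟩ : (frobenius k p).fieldRange)
  have htr : Transcendental k₀ a := fun h => ha (mem_frobenius_fieldRange_of_isAlgebraic p h)
  have : Subsingleton {i : Fin 2 // i ≠ 1} := ⟨fun i j => Subtype.ext (by omega)⟩
  have hbasis : IsTranscendenceBasis k₀ fun i : {i : Fin 2 // i ≠ 1} => ![a, b] i :=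
    ((algebraicIndependent_singleton_iff (⟨0, by decide⟩ : {i : Fin 2 // i ≠ 1})).2
      htr).isTranscendenceBasis_of_lift_trdeg_le_of_finite (by simpa using htrdeg)
  obtain ⟨i, -, hsep⟩ := exists_isTranscendenceBasis_and_isSeparable_of_linearIndepOn_pow p hp
    (fun s hs => hs.pow_expChar p) (1 : Fin 2) hbasis
  obtain rfl | rfl : i = 0 ∨ i = 1 := by fin_cases i <;> simp
  · have hcompl : ({0}ᶜ : Set (Fin 2)) = {1} := by ext i; fin_cases i <;> simp
    rw [hcompl, Set.image_singleton] at hsep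
    have hab := mem_adjoin_frobenius_fieldRange_of_isSeparable p hsep
    rw [adjoin_simple_eq_of_mem_adjoin_simple hp (pow_mem_frobenius_fieldRange p a)
      (pow_mem_frobenius_fieldRange p b) ha hb hab]
    exact mem_adjoin_simple_self _ b
  · have hcompl : ({1}ᶜ : Set (Fin 2)) = {0} := by ext i; fin_cases i <;> simp
    rw [hcompl, Set.image_singleton] at hsep
    exact mem_adjoin_frobenius_fieldRange_of_isSeparable p hsep

end Frobenius

theorem stmt_12_general (p : ℕ) [Fact p.Prime] (k₀ : Type*) [Field k₀] [CharP k₀ p]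
    [PerfectRing k₀ p] (k : Type*) [Field k] [Algebra k₀ k] [ExpChar k p]
    (htr : ∃ x : k, Algebra.IsAlgebraic ↥(IntermediateField.adjoin k₀ {x}) k) :
    Module.rank ↥((frobenius k p).fieldRange) k ≤ p := by
  obtain ⟨x, hx⟩ := htr
  have hp : p.Prime := Fact.out
  by_cases hF : ∀ z : k, z ∈ (frobenius k p).fieldRange
  · have hbot : (⊥ : Subalgebra (frobenius k p).fieldRange k) = ⊤ :=
      eq_top_iff.2 fun z _ => Algebra.mem_bot.2 ⟨⟨z, hF z⟩, rfl⟩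
    rw [Subalgebra.bot_eq_top_iff_rank_eq_one.1 hbot]
    exact_mod_cast hp.one_lt.le
  · obtain ⟨a, ha⟩ := not_forall.1 hF
    have : FiniteDimensional (frobenius k p).fieldRange (frobenius k p).fieldRange⟮a⟯ :=
      adjoin.finiteDimensional (isIntegral_of_pow_mem hp.pos (pow_mem_frobenius_fieldRange p a))
    rw [← rank_top', ← adjoin_frobenius_fieldRange_eq_top p hp
      (trdeg_le_one_of_isAlgebraic_adjoin_simple hx) ha, ← finrank_eq_rank,
      finrank_adjoin_simple_of_pow_mem hp (pow_mem_frobenius_fieldRange p a) ha]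

/-- Let `k₀` be a perfect field of characteristic `p > 0` and let `k` be an extension field of
`k₀` of transcendence degree at most `1` over `k₀` (i.e. `k` is algebraic over the subfield
generated by `k₀` and a single element). Then `[k : k^p] ≤ p`. -/
theorem stmt_12 (p : ℕ) [Fact p.Prime] (k₀ : Type*) [Field k₀] [CharP k₀ p]
    [PerfectRing k₀ p] (k : Type*) [Field k] [Algebra k₀ k] [CharP k p] [ExpChar k p]
    (htr : ∃ x : k, Algebra.IsAlgebraic ↥(IntermediateField.adjoin k₀ {x}) k) :
    Module.rank ↥((frobenius k p).fieldRange) k ≤ p :=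
  stmt_12_general p k₀ k htr
end
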